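/- arXiv:2505.01757 — 5 statements merged into one kernel-verified Lean document; each statement's English description precedes it below -/
import Mathlib

section
/- Let V be a finite type, r : V → V → Prop the edge relation of a directed graph with reachability Relation.ReflTransGen r, and O ⊆ V a set of output (measured) vertices. Suppose every parent SCC contains an output vertex, i.e., for every sink-SCC vertex w (one satisfying ∀ u, Relation.ReflTransGen r w u → Relation.ReflTransGen r u w) there exists o ∈ O with Relation.ReflTransGen r w o. Then every vertex is output-connected: for every v ∈ V there exists o ∈ O with Relation.ReflTransGen r v o. (This is the graph-theoretic content of the paper's Lemma 1(i): one output from every parent SCC of the system digraph suffices to output-connect every state node.) -/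
/-- If every sink-SCC vertex reaches some output vertex, then every vertex is
output-connected: it reaches some member of the output set `O`. -/
theorem output_connected_of_parent_scc_output {V : Type*} [Fintype V] (r : V → V → Prop)
    (O : Set V)
    (h : ∀ w : V, (∀ u : V, Relation.ReflTransGen r w u → Relation.ReflTransGen r u w) →
      ∃ o ∈ O, Relation.ReflTransGen r w o) :
    ∀ v : V, ∃ o ∈ O, Relation.ReflTransGen r v o := by
  classical
  set f : V → ℕ := fun w => (Finset.univ.filter (fun u => Relation.ReflTransGen r w u)).card
    with hf
  suffices H : ∀ n : ℕ, ∀ v : V, f v ≤ n → ∃ o ∈ O, Relation.ReflTransGen r v o by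
    intro v; exact H (f v) v le_rfl
  intro n
  induction n with
  | zero =>
    intro v hv
    exfalso
    have : v ∈ Finset.univ.filter (fun u => Relation.ReflTransGen r v u) := by
      simp [Relation.ReflTransGen.refl]
    have hp := Finset.card_pos.mpr ⟨v, this⟩
    simp only [hf] at hv
    omega
  | succ n ih =>
    intro v hv
    by_cases hs : ∀ u : V, Relation.ReflTransGen r v u → Relation.ReflTransGen r u v
    · exact h v hs
    · push_neg at hs
      obtain ⟨u, hvu, huv⟩ := hs
      have hsub : (Finset.univ.filter (fun x => Relation.ReflTransGen r u x)) ⊂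
          (Finset.univ.filter (fun x => Relation.ReflTransGen r v x)) := by
        constructor
        · intro x hx
          simp only [Finset.mem_filter, Finset.mem_univ, true_and] at hx ⊢
          exact hvu.trans hx
        · intro hsup
          have : v ∈ Finset.univ.filter (fun x => Relation.ReflTransGen r u x) := by
            apply hsup; simp [Relation.ReflTransGen.refl]
          simp only [Finset.mem_filter, Finset.mem_univ, true_and] at this
          exact huv this
      have hlt : f u < f v := Finset.card_lt_card hsub
      obtain ⟨o, ho, huo⟩ := ih u (by omega)
      exact ⟨o, ho, hvu.trans huo⟩
end

section
/- Let V be a finite type, r : V → V → Prop the edge relation of a directed graph with reachability Relation.ReflTransGen r, O ⊆ V a finite set of output vertices, and q a natural number. Suppose every parent SCC contains at least q+1 output vertices: for every sink-SCC vertex w (one satisfying ∀ u, Relation.ReflTransGen r w u → Relation.ReflTransGen r u w), the set {o ∈ O | Relation.ReflTransGen r w o ∧ Relation.ReflTransGen r o w} has cardinality at least q+1. Then for every failed set F ⊆ O with |F| ≤ q and every vertex v ∈ V, there exists a surviving output o ∈ O \ F with Relation.ReflTransGen r v o. (This is the observability-preservation part of the paper's Theorem 2: placing q+1 observationally equivalent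 outputs in every parent SCC guarantees that after removal of any q sensors, every state node remains output-connected.) -/
open Relation Classical

lemma exists_sink_reach {V : Type*} [Fintype V] (r : V → V → Prop) (v : V) :
    ∃ w, ReflTransGen r v w ∧ ∀ u, ReflTransGen r w u → ReflTransGen r u w := by
  classical
  have main : ∀ n (v : V),
      (Finset.univ.filter (fun u => ReflTransGen r v u)).card ≤ n →
      ∃ w, ReflTransGen r v w ∧ ∀ u, ReflTransGen r w u → ReflTransGen r u w := by
    intro n
    induction n with
    | zero =>
      intro v hv
      exfalso
      have : v ∈ Finset.univ.filter (fun u => ReflTransGen r v u) := by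
        simp [ReflTransGen.refl]
      have := Finset.card_pos.mpr ⟨v, this⟩
      omega
    | succ n ih =>
      intro v hv
      by_cases hs : ∀ u, ReflTransGen r v u → ReflTransGen r u v
      · exact ⟨v, ReflTransGen.refl, hs⟩
      · push_neg at hs
        obtain ⟨u, hvu, huv⟩ := hs
        have hsub : Finset.univ.filter (fun x => ReflTransGen r u x) ⊂
            Finset.univ.filter (fun x => ReflTransGen r v x) := by
          constructor
          · intro x hx
            simp only [Finset.mem_filter, Finset.mem_univ, true_and] at hx ⊢
            exact hvu.trans hx
          · intro hc
            have : v ∈ Finset.univ.filter (fun x => ReflTransGen r u x) := by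
              apply hc; simp [ReflTransGen.refl]
            simp only [Finset.mem_filter, Finset.mem_univ, true_and] at this
            exact huv this
        have := Finset.card_lt_card hsub
        obtain ⟨w, hw1, hw2⟩ := ih u (by omega)
        exact ⟨w, hvu.trans hw1, hw2⟩
  exact main _ v le_rfl

/-- If every sink-SCC vertex has at least `q+1` outputs in its own SCC, then after removal
of any set `F` of at most `q` outputs, every vertex still reaches a surviving output. -/
theorem resilient_output_connectivity {V : Type*} [Fintype V] (r : V → V → Prop)
    (O : Finset V) (q : ℕ)
    (h : ∀ w : V, (∀ u : V, Relation.ReflTransGen r w u → Relation.ReflTransGen r u w) →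
      q + 1 ≤ {o ∈ (O : Set V) |
        Relation.ReflTransGen r w o ∧ Relation.ReflTransGen r o w}.ncard) :
    ∀ F : Finset V, F ⊆ O → F.card ≤ q →
      ∀ v : V, ∃ o ∈ O, o ∉ F ∧ Relation.ReflTransGen r v o := by
  classical
  intro F hFO hFq v
  obtain ⟨w, hvw, hsink⟩ := exists_sink_reach r v
  have hq := h w hsink
  set S : Set V := {o ∈ (O : Set V) | ReflTransGen r w o ∧ ReflTransGen r o w} with hS
  have hSfin : S.Finite := Set.toFinite _
  -- S has more elements than F, so some element of S is not in F
  have hne : ¬ (S ⊆ (F : Set V)) := by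
    intro hsub
    have := Set.ncard_le_ncard hsub (Set.toFinite _)
    have : (F : Set V).ncard = F.card := by
      simp [Set.ncard_coe_finset]
    omega
  rw [Set.not_subset] at hne
  obtain ⟨o, hoS, hoF⟩ := hne
  obtain ⟨hoO, hwo, how⟩ := hoS
  exact ⟨o, hoO, by simpa using hoF, hvw.trans hwo⟩
end

section
/- Let Â : Matrix (Fin N) (Fin N) ℝ. Then Â is Schur stable (every complex eigenvalue of Â has modulus < 1) if and only if there exists a positive-definite matrix Q : Matrix (Fin N) (Fin N) ℝ such that the 2N×2N block matrix fromBlocks Q Âᵀ Â Q⁻¹ is positive definite. (This is the LMI characterization, Eq. (13) with the coupling constraint Q = R⁻¹, used in the paper to compute the block-diagonal estimator gain.) -/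
/-!
Put `P = Q⁻¹`. By the Schur complement, the LMI says exactly that `P ≻ 0` and
`P - Â P Âᵀ ≻ 0`, a discrete Lyapunov inequality for `Âᵀ`. If `Âᵀ v = μ v` with `v ≠ 0`, then
`v* (P - Â P Âᵀ) v = (1 - |μ|²) v* P v`, which forces `|μ| < 1`. Conversely, if the spectral
radius is `< 1`, Gelfand's formula makes `∑ ‖Âᵏ‖` converge, and `P = ∑ Âᵏ (Âᵀ)ᵏ` satisfies
`P = 1 + Â P Âᵀ`, so `P ≻ 0` and `P - Â P Âᵀ = 1`. The series is summed among complex matrices,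
viewed as a C⋆-algebra, and brought back to real matrices by taking real parts.
-/

open Filter Matrix
open scoped ENNReal NNReal ComplexOrder

namespace spectrum

variable {A : Type*} [NormedRing A] [NormedAlgebra ℂ A] [CompleteSpace A]

theorem spectralRadius_lt_one_of_forall_norm_lt_one {a : A}
    (h : ∀ μ ∈ spectrum ℂ a, ‖μ‖ < 1) : spectralRadius ℂ a < 1 := by
  rcases subsingleton_or_nontrivial A with hA | hA
  · simp [spectralRadius, spectrum.of_subsingleton]
  · simpa using spectralRadius_lt_of_forall_lt a (r := 1) fun z hz => by
      simpa [← NNReal.coe_lt_coe] using h z hz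

theorem summable_norm_pow_of_spectralRadius_lt_one {a : A} (h : spectralRadius ℂ a < 1) :
    Summable fun k : ℕ => ‖a ^ k‖ := by
  obtain ⟨r, hρr, hr1⟩ := ENNReal.lt_iff_exists_nnreal_btwn.mp h
  refine .of_norm_bounded_eventually_nat (g := fun k => (r : ℝ) ^ k)
    (summable_geometric_of_lt_one r.2 (by exact_mod_cast hr1)) ?_
  filter_upwards [(pow_nnnorm_pow_one_div_tendsto_nhds_spectralRadius a).eventually_lt_const hρr,
    eventually_ne_atTop 0] with k hk hk0
  rw [one_div, ENNReal.rpow_inv_lt_iff (by positivity), ENNReal.rpow_natCast] at hk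
  rw [norm_norm]
  exact_mod_cast hk.le

end spectrum

theorem exists_nonneg_eq_one_add_star_mul_mul {A : Type*} [CStarAlgebra A] [PartialOrder A]
    [StarOrderedRing A] {a : A} (h : spectralRadius ℂ a < 1) :
    ∃ p : A, 0 ≤ p ∧ p = 1 + star a * p * a := by
  have hpow := spectrum.summable_norm_pow_of_spectralRadius_lt_one h
  have hs : Summable fun k : ℕ => star (a ^ k) * a ^ k := by
    refine .of_norm_bounded_eventually_nat hpow ?_
    filter_upwards [hpow.tendsto_atTop_zero.eventually_le_const one_pos] with k hk
    rw [CStarRing.norm_star_mul_self]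
    exact mul_le_of_le_one_right (norm_nonneg _) hk
  refine ⟨∑' k, star (a ^ k) * a ^ k, tsum_nonneg fun k => star_mul_self_nonneg _, ?_⟩
  conv_lhs => rw [hs.tsum_eq_zero_add]
  rw [← hs.tsum_mul_left, ← (hs.mul_left _).tsum_mul_right]
  simp only [pow_succ, star_mul, mul_assoc, pow_zero, star_one, mul_one]

namespace Matrix

variable {m n : Type*}

theorem conjTranspose_map_ofReal (A : Matrix m n ℝ) :
    (A.map Complex.ofReal)ᴴ = Aᵀ.map Complex.ofReal := by
  ext i j
  simp

variable [Fintype n]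

theorem posDef_fromBlocks₁₁_iff [Fintype m] [DecidableEq m] [DecidableEq n] {𝕜 : Type*}
    [RCLike 𝕜] {A : Matrix m m 𝕜} (B : Matrix m n 𝕜) (D : Matrix n n 𝕜) (hA : A.PosDef)
    [Invertible A] : (fromBlocks A B Bᴴ D).PosDef ↔ (D - Bᴴ * A⁻¹ * B).PosDef := by
  have hdet : (fromBlocks A B Bᴴ D).det = A.det * (D - Bᴴ * A⁻¹ * B).det := by
    rw [det_fromBlocks₁₁, invOf_eq_nonsing_inv]
  constructor
  · intro h
    exact ((hA.fromBlocks₁₁ B D).mp h.posSemidef).posDef_iff_det_ne_zero.mpr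
      (right_ne_zero_of_mul (hdet ▸ h.det_pos.ne'))
  · intro h
    exact ((hA.fromBlocks₁₁ B D).mpr h.posSemidef).posDef_iff_det_ne_zero.mpr
      (hdet ▸ mul_ne_zero hA.det_pos.ne' h.det_pos.ne')

theorem spectrum_transpose [DecidableEq n] {K : Type*} [Field K] (M : Matrix n n K) :
    spectrum K Mᵀ = spectrum K M := by
  ext μ
  rw [mem_spectrum_iff_isRoot_charpoly, mem_spectrum_iff_isRoot_charpoly, charpoly_transpose]

theorem exists_mulVec_eq_smul_of_mem_spectrum [DecidableEq n] {K : Type*} [Field K]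
    {M : Matrix n n K} {μ : K} (h : μ ∈ spectrum K M) : ∃ v ≠ 0, M *ᵥ v = μ • v := by
  rw [spectrum.mem_iff, isUnit_iff_isUnit_det, isUnit_iff_ne_zero, not_not,
    ← exists_mulVec_eq_zero_iff] at h
  obtain ⟨v, hv, hMv⟩ := h
  refine ⟨v, hv, ?_⟩
  rwa [Algebra.algebraMap_eq_smul_one, sub_mulVec, smul_mulVec, one_mulVec, sub_eq_zero,
    eq_comm] at hMv

theorem norm_lt_one_of_mem_spectrum [DecidableEq n] {𝕜 : Type*} [RCLike 𝕜]
    {M P : Matrix n n 𝕜} (hP : P.PosDef) (hMP : (P - Mᴴ * P * M).PosDef) {μ : 𝕜}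
    (hμ : μ ∈ spectrum 𝕜 M) : ‖μ‖ < 1 := by
  obtain ⟨v, hv, hMv⟩ := exists_mulVec_eq_smul_of_mem_spectrum hμ
  have hform : star v ⬝ᵥ ((P - Mᴴ * P * M) *ᵥ v)
      = ((1 - ‖μ‖ ^ 2 : ℝ) : 𝕜) * (star v ⬝ᵥ (P *ᵥ v)) := by
    rw [sub_mulVec, dotProduct_sub, ← mulVec_mulVec, ← mulVec_mulVec,
      dotProduct_mulVec (star v) Mᴴ, ← star_mulVec, hMv, mulVec_smul, star_smul,
      dotProduct_smul, smul_dotProduct]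
    simp only [smul_eq_mul, RCLike.star_def]
    push_cast
    linear_combination (-(star v ⬝ᵥ (P *ᵥ v))) * RCLike.conj_mul μ
  have hpos := hMP.dotProduct_mulVec_pos hv
  rw [hform] at hpos
  have := RCLike.ofReal_pos.mp (pos_of_mul_pos_left hpos (hP.dotProduct_mulVec_pos hv).le)
  exact (sq_lt_one_iff₀ (norm_nonneg μ)).mp (by linarith)

theorem PosSemidef.map_ofReal {S : Matrix n n ℝ} (hS : S.PosSemidef) :
    (S.map Complex.ofReal).PosSemidef := by
  obtain ⟨k, v, rfl⟩ := posSemidef_iff_eq_sum_vecMulVec.mp hS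
  convert posSemidef_sum Finset.univ fun i _ =>
    posSemidef_vecMulVec_self_star (Complex.ofReal ∘ v i)
  ext a b
  simp [vecMulVec, Matrix.sum_apply]

theorem PosDef.map_ofReal [DecidableEq n] {S : Matrix n n ℝ} (hS : S.PosDef) :
    (S.map Complex.ofReal).PosDef := by
  rw [hS.posSemidef.map_ofReal.posDef_iff_det_ne_zero]
  change (Complex.ofRealHom.mapMatrix S).det ≠ 0
  rw [← RingHom.map_det]
  exact Complex.ofReal_ne_zero.mpr hS.det_pos.ne'

theorem PosDef.map_re {P : Matrix n n ℂ} (hP : P.PosDef) : (P.map Complex.re).PosDef := by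
  refine .of_dotProduct_mulVec_pos ?_ fun x hx => ?_
  · ext i j
    simp [← hP.isHermitian.apply i j]
  · have hxc : Complex.ofReal ∘ x ≠ 0 := fun h =>
      hx (funext fun i => by simpa using congrFun h i)
    have hre : star x ⬝ᵥ (P.map Complex.re *ᵥ x)
        = (star (Complex.ofReal ∘ x) ⬝ᵥ (P *ᵥ (Complex.ofReal ∘ x))).re := by
      simp [dotProduct, mulVec, Finset.mul_sum]
    rw [hre]
    exact (Complex.pos_iff.mp (hP.dotProduct_mulVec_pos hxc)).1

theorem map_re_ofReal_mul_mul_ofReal (A : Matrix m n ℝ) (P : Matrix n n ℂ) (B : Matrix n m ℝ) :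
    (A.map Complex.ofReal * P * B.map Complex.ofReal).map Complex.re
      = A * P.map Complex.re * B := by
  ext i j
  simp [mul_apply, Complex.re_sum, Finset.sum_mul]

open scoped Matrix.Norms.L2Operator MatrixOrder in
theorem exists_posDef_sub_mul_mul_transpose_eq_one [DecidableEq n] {A : Matrix n n ℝ}
    (h : ∀ μ ∈ spectrum ℂ (A.map Complex.ofReal), ‖μ‖ < 1) :
    ∃ P : Matrix n n ℝ, P.PosDef ∧ P - A * P * Aᵀ = 1 := by
  have hAt : ∀ μ ∈ spectrum ℂ (Aᵀ.map Complex.ofReal), ‖μ‖ < 1 := by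
    rwa [transpose_map, spectrum_transpose]
  obtain ⟨P, hP0, hPeq⟩ := exists_nonneg_eq_one_add_star_mul_mul
    (spectrum.spectralRadius_lt_one_of_forall_norm_lt_one hAt)
  have hP : P.PosDef := by
    rw [hPeq]
    exact PosDef.one.add_posSemidef (hP0.posSemidef.conjTranspose_mul_mul_same _)
  rw [star_eq_conjTranspose, conjTranspose_map_ofReal, transpose_transpose] at hPeq
  refine ⟨P.map Complex.re, hP.map_re, ?_⟩
  calc P.map Complex.re - A * P.map Complex.re * Aᵀ
      = (P - A.map Complex.ofReal * P * Aᵀ.map Complex.ofReal).map Complex.re := by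
        rw [Matrix.map_sub _ Complex.sub_re, map_re_ofReal_mul_mul_ofReal]
    _ = 1 := by rw [sub_eq_iff_eq_add.mpr hPeq, Matrix.map_one _ Complex.zero_re Complex.one_re]

theorem norm_lt_one_of_posDef_sub_mul_mul_transpose [DecidableEq n] {A P : Matrix n n ℝ}
    (hP : P.PosDef) (hAP : (P - A * P * Aᵀ).PosDef) :
    ∀ μ ∈ spectrum ℂ (A.map Complex.ofReal), ‖μ‖ < 1 := by
  intro μ hμ
  rw [← spectrum_transpose, ← transpose_map] at hμ
  refine norm_lt_one_of_mem_spectrum hP.map_ofReal ?_ hμ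
  have hmap : (P - A * P * Aᵀ).map Complex.ofReal = P.map Complex.ofReal
      - (Aᵀ.map Complex.ofReal)ᴴ * P.map Complex.ofReal * Aᵀ.map Complex.ofReal := by
    ext i j
    simp [conjTranspose_map_ofReal, mul_apply]
  exact hmap ▸ hAP.map_ofReal

end Matrix

/-- LMI characterization of Schur stability (Eq. (13) with coupling `Q = R⁻¹`): `Â` is
Schur stable iff there exists `Q ≻ 0` such that `[[Q, Âᵀ],[Â, Q⁻¹]] ≻ 0`. -/
theorem schur_stable_iff_lmi {N : ℕ} (Ahat : Matrix (Fin N) (Fin N) ℝ) :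
    (∀ μ ∈ spectrum ℂ (Ahat.map Complex.ofReal), ‖μ‖ < 1) ↔
    ∃ Q : Matrix (Fin N) (Fin N) ℝ, Q.PosDef ∧
      (Matrix.fromBlocks Q Ahatᵀ Ahat Q⁻¹).PosDef := by
  have lmi_iff {Q : Matrix (Fin N) (Fin N) ℝ} (hQ : Q.PosDef) :
      (fromBlocks Q Ahatᵀ Ahat Q⁻¹).PosDef ↔ (Q⁻¹ - Ahat * Q⁻¹ * Ahatᵀ).PosDef := by
    have := hQ.isUnit.invertible
    simpa using posDef_fromBlocks₁₁_iff Ahatᵀ Q⁻¹ hQ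
  constructor
  · intro h
    obtain ⟨P, hP, hPeq⟩ := exists_posDef_sub_mul_mul_transpose_eq_one h
    refine ⟨P⁻¹, hP.inv, (lmi_iff hP.inv).mpr ?_⟩
    rw [nonsing_inv_nonsing_inv P (P.isUnit_iff_isUnit_det.mp hP.isUnit), hPeq]
    exact PosDef.one
  · rintro ⟨Q, hQ, hLMI⟩
    exact norm_lt_one_of_posDef_sub_mul_mul_transpose hQ.inv ((lmi_iff hQ).mp hLMI)
end

section
/- Let Q, R : Matrix (Fin N) (Fin N) ℝ be positive-definite matrices such that the block matrix fromBlocks Q 1 1 R is positive semidefinite (where 1 is the N×N identity). Then trace (Q * R) ≥ N, and trace (Q * R) = N holds if and only if Q * R = 1, i.e., R = Q⁻¹. (This is the cone-complementarity relaxation underlying Algorithm 1: the nonconvex constraint Q = R⁻¹ is recovered as the minimizer of trace(QR) subject to Q, R ≻ 0 and [[Q, I],[I, R]] ⪰ 0, with optimal value N per block.) -/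
/-!
By the Schur complement, the block condition says exactly that `S := R - Q⁻¹` is positive
semidefinite, and then `trace (Q * R) = N + trace (Q * S)`. Writing `Q = Dᴴ D` and `S = Cᴴ C`,
`trace (Q * S)` is the squared Frobenius norm of `D Cᴴ`, so it is nonnegative and vanishes only
when `C = 0` (as `D` is invertible), i.e. when `R = Q⁻¹`.
-/

open Matrix
open scoped MatrixOrder ComplexOrder

namespace Matrix

variable {n 𝕜 : Type*} [Fintype n] [RCLike 𝕜] {A B : Matrix n n 𝕜}

theorem PosSemidef.exists_eq_conjTranspose_mul_self (hB : B.PosSemidef) :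
    ∃ C : Matrix n n 𝕜, B = Cᴴ * C := by
  classical
  exact CStarAlgebra.nonneg_iff_eq_star_mul_self.mp hB.nonneg

theorem PosSemidef.trace_mul_nonneg (hA : A.PosSemidef) (hB : B.PosSemidef) :
    0 ≤ (A * B).trace := by
  obtain ⟨C, rfl⟩ := hB.exists_eq_conjTranspose_mul_self
  rw [← mul_assoc, trace_mul_comm, ← mul_assoc]
  exact (hA.mul_mul_conjTranspose_same C).trace_nonneg

theorem PosDef.trace_mul_eq_zero_iff (hA : A.PosDef) (hB : B.PosSemidef) :
    (A * B).trace = 0 ↔ B = 0 := by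
  classical
  refine ⟨fun h => ?_, fun h => by rw [h, mul_zero, trace_zero]⟩
  obtain ⟨C, rfl⟩ := hB.exists_eq_conjTranspose_mul_self
  obtain ⟨D, hD, rfl⟩ := CStarAlgebra.isStrictlyPositive_iff_eq_star_mul_self.mp
    hA.isStrictlyPositive
  have hDC : D * Cᴴ = 0 := by
    rw [← trace_conjTranspose_mul_self_eq_zero_iff, ← h, conjTranspose_mul,
      conjTranspose_conjTranspose, star_eq_conjTranspose, trace_mul_cycle, trace_mul_comm]
    simp only [mul_assoc]
  rw [conjTranspose_eq_zero.mp (hD.mul_right_eq_zero.mp hDC), mul_zero]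

theorem PosDef.posSemidef_fromBlocks_one_one_iff [DecidableEq n] (hA : A.PosDef)
    (D : Matrix n n 𝕜) : (fromBlocks A 1 1 D).PosSemidef ↔ (D - A⁻¹).PosSemidef := by
  have : Invertible A := hA.isUnit.invertible
  simpa using hA.fromBlocks₁₁ 1 D

end Matrix

theorem cone_complementarity_general {N : ℕ} (Q R : Matrix (Fin N) (Fin N) ℝ)
    (hQ : Q.PosDef)
    (h : (Matrix.fromBlocks Q 1 1 R).PosSemidef) :
    (N : ℝ) ≤ (Q * R).trace ∧ ((Q * R).trace = (N : ℝ) ↔ Q * R = 1) := by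
  have hS : (R - Q⁻¹).PosSemidef := (hQ.posSemidef_fromBlocks_one_one_iff R).mp h
  have hQR : Q * R = 1 + Q * (R - Q⁻¹) := by
    rw [mul_sub, mul_nonsing_inv Q hQ.det_pos.ne'.isUnit, add_sub_cancel]
  have htrace : (Q * R).trace = N + (Q * (R - Q⁻¹)).trace := by
    rw [hQR, trace_add, trace_one, Fintype.card_fin]
  refine ⟨by linarith [hQ.posSemidef.trace_mul_nonneg hS], ?_⟩
  rw [htrace, add_eq_left, hQ.trace_mul_eq_zero_iff hS, hQR, add_eq_left,
    hQ.isUnit.mul_right_eq_zero]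

/-- Cone-complementarity relaxation: if `Q, R ≻ 0` and `[[Q, I],[I, R]] ⪰ 0`, then
`trace (Q * R) ≥ N`, with equality iff `Q * R = 1` (i.e. `R = Q⁻¹`). -/
theorem cone_complementarity {N : ℕ} (Q R : Matrix (Fin N) (Fin N) ℝ)
    (hQ : Q.PosDef) (hR : R.PosDef)
    (h : (Matrix.fromBlocks Q 1 1 R).PosSemidef) :
    (N : ℝ) ≤ (Q * R).trace ∧ ((Q * R).trace = (N : ℝ) ↔ Q * R = 1) :=
  cone_complementarity_general Q R hQ h
end

section
/- Let α and β be finite types, r : α → α → Prop and s : β → β → Prop edge relations of two directed graphs, and define the product relation p on α × β by p (i,a) (j,b) ↔ r i j ∧ s a b (this is the edge relation of the digraph of the Kronecker product W ⊗ A, where r is the digraph of the consensus matrix W and s the digraph of the system matrix A). Assume: (i) r is strongly connected in the walk sense: ∀ i j, Relation.TransGen r i j; (ii) s has a self-loop at every vertex: ∀ a, s a a; and (iii) s is strongly connected: ∀ a b, Relation.ReflTransGen s a b. Then the product digraph is strongly connected: ∀ i a j b, Relation.TransGen p (i,a) (j,b). (This is the graph-theoretic mechanism behind the paper's Lemma 2: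 when the sensor network is strongly connected and the full-rank system digraph is strongly connected with self-loops at all state nodes, the Kronecker network product W ⊗ A is irreducible, which underlies distributed (W ⊗ A, D_C)-observability.) -/
/-- If the digraph `r` is strongly connected (in the walk sense), and the digraph `s` is
strongly connected with a self-loop at every vertex, then the Kronecker-product digraph
`p` on `α × β` is strongly connected. -/
theorem kronecker_product_strongly_connected {α β : Type*} [Fintype α] [Fintype β]
    (r : α → α → Prop) (s : β → β → Prop)
    (p : α × β → α × β → Prop)
    (hp : ∀ i a j b, p (i, a) (j, b) ↔ r i j ∧ s a b)
    (hr : ∀ i j, Relation.TransGen r i j)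
    (hs_loop : ∀ a, s a a)
    (hs : ∀ a b, Relation.ReflTransGen s a b) :
    ∀ i a j b, Relation.TransGen p (i, a) (j, b) := by
  have lift : ∀ a i j, Relation.TransGen r i j → Relation.TransGen p (i, a) (j, a) := by
    intro a i j h
    induction h with
    | single h => exact Relation.TransGen.single ((hp _ _ _ _).2 ⟨h, hs_loop a⟩)
    | tail _ h ih => exact ih.tail ((hp _ _ _ _).2 ⟨h, hs_loop a⟩)
  intro i a j b
  have key : ∀ a b, Relation.ReflTransGen s a b →
      ∀ i j, Relation.TransGen p (i, a) (j, b) := by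
    intro a b h
    induction h using Relation.ReflTransGen.head_induction_on with
    | refl => intro i j; exact lift b i j (hr i j)
    | @head a' c hac _ ih =>
      intro i j
      obtain ⟨n, hin, hni⟩ : ∃ n, Relation.ReflTransGen r i n ∧ r n i :=
        (Relation.TransGen.tail'_iff).1 (hr i i)
      have h1 : Relation.ReflTransGen p (i, a') (n, a') := by
        clear hni
        induction hin with
        | refl => exact Relation.ReflTransGen.refl
        | tail _ h ih2 => exact ih2.tail ((hp _ _ _ _).2 ⟨h, hs_loop a'⟩)
      have h2 : p (n, a') (i, c) := (hp _ _ _ _).2 ⟨hni, hac⟩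
      exact Relation.TransGen.trans_right h1 (Relation.TransGen.head h2 (ih i j))
  exact key a b (hs a b) i j
end
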